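/- arXiv:math/0402215 — 3 statements merged into one kernel-verified Lean document; each statement's English description precedes it below -/
import Mathlib

section
/- A finite connected simple graph with as many edges as vertices has exactly one cycle: let V be a nonempty finite type and G a connected simple graph on V whose number of edges equals the number of vertices (G.edgeFinset.card = Fintype.card V). Then (a) G contains a cycle, i.e. there exist a vertex v and a closed walk w : G.Walk v v with w.IsCycle; and (b) any two cycles of G have the same edge set: if w₁ : G.Walk a a and w₂ : G.Walk b b are both cycles, then the set of edges traversed by w₁ equals the set of edges traversed by w₂. -/
/-!
An edge lying on a cycle is not a bridge, so deleting it from a connected graph with as many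
edges as vertices leaves a connected graph with one edge fewer than vertices, that is, a tree.
Hence every cycle of the original graph must pass through that edge, so any two cycles share
all their edges. A cycle exists because a connected acyclic graph would have one edge fewer
than vertices.
-/

namespace SimpleGraph

variable {V : Type*} {G : SimpleGraph V}

lemma Connected.connected_deleteEdges_of_mem_edges_isCycle (hG : G.Connected) {u : V}
    {p : G.Walk u u} (hp : p.IsCycle) {e : Sym2 V} (he : e ∈ p.edges) :
    (G.deleteEdges {e}).Connected := by
  induction e using Sym2.ind with
  | _ x y =>
    exact hG.connected_delete_edge_of_not_isBridge fun hbr =>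
      hbr.notMem_edges_of_isCycle hp he

lemma natCard_edgeSet_deleteEdges_singleton_add_one [Finite G.edgeSet] {e : Sym2 V}
    (he : e ∈ G.edgeSet) :
    Nat.card (G.deleteEdges {e}).edgeSet + 1 = Nat.card G.edgeSet := by
  rw [edgeSet_deleteEdges, Nat.card_coe_set_eq, Nat.card_coe_set_eq]
  exact Set.ncard_sdiff_singleton_add_one he

lemma Connected.isTree_deleteEdges_of_mem_edges_isCycle [Finite V] (hG : G.Connected)
    (hcard : Nat.card G.edgeSet = Nat.card V) {u : V} {p : G.Walk u u} (hp : p.IsCycle)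
    {e : Sym2 V} (he : e ∈ p.edges) : (G.deleteEdges {e}).IsTree := by
  rw [isTree_iff_connected_and_card, natCard_edgeSet_deleteEdges_singleton_add_one
    (p.edges_subset_edgeSet he), hcard]
  exact ⟨hG.connected_deleteEdges_of_mem_edges_isCycle hp he, rfl⟩

lemma IsAcyclic.mem_edges_of_isCycle {e : Sym2 V} (h : (G.deleteEdges {e}).IsAcyclic) {u : V}
    {p : G.Walk u u} (hp : p.IsCycle) : e ∈ p.edges := by
  by_contra he
  exact h _ (hp.toDeleteEdges G {e} fun e' he' (heq : e' = e) => he (heq ▸ he'))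

lemma Connected.exists_isCycle_of_card_edgeSet_eq [Finite V] (hG : G.Connected)
    (hcard : Nat.card G.edgeSet = Nat.card V) : ∃ (v : V) (p : G.Walk v v), p.IsCycle := by
  by_contra! hacyclic
  have := (isTree_iff_connected_and_card.mp ⟨hG, hacyclic⟩).2
  omega

lemma Connected.mem_edges_of_isCycle_of_card_edgeSet_eq [Finite V] (hG : G.Connected)
    (hcard : Nat.card G.edgeSet = Nat.card V) {a b : V} {p : G.Walk a a} {q : G.Walk b b}
    (hp : p.IsCycle) (hq : q.IsCycle) {e : Sym2 V} (he : e ∈ p.edges) : e ∈ q.edges :=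
  (hG.isTree_deleteEdges_of_mem_edges_isCycle hcard hp he).isAcyclic.mem_edges_of_isCycle hq

end SimpleGraph

theorem unique_cycle_of_connected_card_edges_eq_card_vertices_general
    (V : Type*) [Fintype V]
    (G : SimpleGraph V) [Fintype G.edgeSet]
    (hconn : G.Connected)
    (hcard : G.edgeFinset.card = Fintype.card V) :
    (∃ (v : V) (w : G.Walk v v), w.IsCycle) ∧
    (∀ (a b : V) (w₁ : G.Walk a a) (w₂ : G.Walk b b), w₁.IsCycle → w₂.IsCycle →
      {e | e ∈ w₁.edges} = {e | e ∈ w₂.edges}) := by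
  have hcard' : Nat.card G.edgeSet = Nat.card V := by
    rw [Nat.card_eq_fintype_card, Nat.card_eq_fintype_card, ← SimpleGraph.edgeFinset_card, hcard]
  refine ⟨hconn.exists_isCycle_of_card_edgeSet_eq hcard', fun a b w₁ w₂ h₁ h₂ => ?_⟩
  ext e
  exact ⟨hconn.mem_edges_of_isCycle_of_card_edgeSet_eq hcard' h₁ h₂,
    hconn.mem_edges_of_isCycle_of_card_edgeSet_eq hcard' h₂ h₁⟩

/-- A finite connected simple graph with as many edges as vertices contains a cycle, and
any two of its cycles traverse the same set of edges (i.e. it has exactly one cycle). -/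
theorem unique_cycle_of_connected_card_edges_eq_card_vertices
    (V : Type*) [Fintype V] [Nonempty V] [DecidableEq V]
    (G : SimpleGraph V) [Fintype G.edgeSet]
    (hconn : G.Connected)
    (hcard : G.edgeFinset.card = Fintype.card V) :
    (∃ (v : V) (w : G.Walk v v), w.IsCycle) ∧
    (∀ (a b : V) (w₁ : G.Walk a a) (w₂ : G.Walk b b), w₁.IsCycle → w₂.IsCycle →
      {e | e ∈ w₁.edges} = {e | e ∈ w₂.edges}) :=
  unique_cycle_of_connected_card_edges_eq_card_vertices_general V G hconn hcard
end

section
/- Every cycle in the symmetrization of a digraph with outdegree at most one is directed: let V be a finite type and r : V → V → Prop a relation such that for every vertex v there is at most one w with r v w. Let G be the simple graph on V with adjacency x ~ y iff x ≠ y and (r x y or r y x). Then for every closed walk w : G.Walk v v with w.IsCycle, either every dart of w is positively oriented (for every consecutive pair (a, b) of vertices along w, r a b holds) or every dart of w is negatively oriented (for every consecutive pair (a, b) of vertices along w, r b a holds). -/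
/-!
If a dart `(a, b)` of the symmetrization is not `r`-oriented, then `r b a`; so the next dart
`(b, c)` cannot be `r`-oriented either, since `r b c` would force `c = a` by the outdegree
bound and the two darts would share an edge, which a cycle forbids. Being wrongly oriented thus
propagates along the cycle, and once around it reaches every dart.
-/

namespace SimpleGraph

variable {V : Type*} {G : SimpleGraph V}

theorem Walk.rel_of_mem_darts_of_dartAdj {v : V} (w : G.Walk v v) {R : G.Dart → G.Dart → Prop}
    [IsTrans G.Dart R] (hadj : ∀ d ∈ w.darts, ∀ d' ∈ w.darts, G.DartAdj d d' → R d d') :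
    ∀ d ∈ w.darts, ∀ d' ∈ w.darts, R d d' := by
  -- Running around `w` twice turns the wrap-around step into an ordinary chain step.
  have hchain : (w.darts ++ w.darts).IsChain G.DartAdj :=
    w.darts_append w ▸ (w.append w).isChain_dartAdj_darts
  have hR : (w.darts ++ w.darts).IsChain R :=
    hchain.imp_of_mem_imp fun d d' hd hd' => hadj d (by simpa using hd) d' (by simpa using hd')
  exact (List.pairwise_append.mp hR.pairwise).2.2

theorem Walk.IsTrail.edge_ne_of_dartAdj {u v : V} {w : G.Walk u v} (hw : w.IsTrail)
    {d d' : G.Dart} (hd : d ∈ w.darts) (hd' : d' ∈ w.darts) (hadj : G.DartAdj d d') :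
    d.edge ≠ d'.edge := by
  intro hedge
  obtain rfl : d = d' := List.inj_on_of_nodup_map hw.edges_nodup hd hd' hedge
  exact d.adj.ne hadj.symm

theorem Dart.rel_swap_of_not_rel {r : V → V → Prop} (hG : ∀ x y, G.Adj x y → r x y ∨ r y x)
    (d : G.Dart) (hd : ¬ r d.fst d.snd) : r d.snd d.fst :=
  (hG _ _ d.adj).resolve_left hd

theorem not_rel_of_dartAdj_of_not_rel {r : V → V → Prop}
    (hout : ∀ v w w', r v w → r v w' → w = w') (hG : ∀ x y, G.Adj x y → r x y ∨ r y x)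
    {d d' : G.Dart} (hadj : G.DartAdj d d') (hedge : d.edge ≠ d'.edge)
    (hd : ¬ r d.fst d.snd) : ¬ r d'.fst d'.snd := by
  intro hd'
  have hback : r d'.fst d.fst := hadj ▸ d.rel_swap_of_not_rel hG hd
  have hsnd : d.fst = d'.snd := hout _ _ _ hback hd'
  apply hedge
  rw [Dart.edge, Dart.edge, hsnd, show d.snd = d'.fst from hadj]
  exact Sym2.eq_swap

end SimpleGraph

theorem cycle_is_directed_of_outdegree_le_one_general
    (V : Type*) (r : V → V → Prop)
    (hout : ∀ v w w' : V, r v w → r v w' → w = w')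
    (G : SimpleGraph V)
    (hG : ∀ x y : V, G.Adj x y ↔ x ≠ y ∧ (r x y ∨ r y x))
    (v : V) (w : G.Walk v v) (hw : w.IsCycle) :
    (∀ d ∈ w.darts, r d.toProd.1 d.toProd.2) ∨
    (∀ d ∈ w.darts, r d.toProd.2 d.toProd.1) := by
  have hG' : ∀ x y, G.Adj x y → r x y ∨ r y x := fun x y h => ((hG x y).1 h).2
  by_cases hforward : ∀ d ∈ w.darts, r d.fst d.snd
  · exact Or.inl hforward
  obtain ⟨d₀, hd₀, hr₀⟩ := not_forall₂.mp hforward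
  let R : G.Dart → G.Dart → Prop := fun d d' => ¬ r d.fst d.snd → ¬ r d'.fst d'.snd
  have : IsTrans G.Dart R := ⟨fun _ _ _ h h' hd => h' (h hd)⟩
  have hpropagate : ∀ d ∈ w.darts, R d₀ d :=
    w.rel_of_mem_darts_of_dartAdj (fun d hd d' hd' hadj =>
      SimpleGraph.not_rel_of_dartAdj_of_not_rel hout hG' hadj
        (hw.isTrail.edge_ne_of_dartAdj hd hd' hadj)) d₀ hd₀
  exact Or.inr fun d hd => d.rel_swap_of_not_rel hG' (hpropagate d hd hr₀)

/-- Every cycle in the symmetrization of a digraph with outdegree at most one is directed: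
if `r` is a relation on a finite type `V` such that each vertex has at most one
`r`-successor, and `G` is the simple graph with `x ~ y` iff `x ≠ y` and (`r x y` or
`r y x`), then along any cycle of `G` either every dart is positively oriented by `r` or
every dart is negatively oriented by `r`. -/
theorem cycle_is_directed_of_outdegree_le_one
    (V : Type*) [Fintype V] (r : V → V → Prop)
    (hout : ∀ v w w' : V, r v w → r v w' → w = w')
    (G : SimpleGraph V)
    (hG : ∀ x y : V, G.Adj x y ↔ x ≠ y ∧ (r x y ∨ r y x))
    (v : V) (w : G.Walk v v) (hw : w.IsCycle) :
    (∀ d ∈ w.darts, r d.toProd.1 d.toProd.2) ∨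
    (∀ d ∈ w.darts, r d.toProd.2 d.toProd.1) :=
  cycle_is_directed_of_outdegree_le_one_general V r hout G hG v w hw
end

section
/- The derivative of a curve of Lie brackets is a 2-cocycle: let V be a finite-dimensional complex vector space (with its canonical Hausdorff vector-space topology on the space of bilinear maps V → V → V), and let t ↦ μ_t (t ∈ ℝ) be a map into the space of bilinear maps V → V → V such that each μ_t is a Lie bracket (antisymmetric and satisfying the Jacobi identity) and such that t ↦ μ_t has derivative c at t = 0. Then c x y = − c y x for all x, y ∈ V, and for all x, y, z ∈ V: μ_0 x (c y z) + μ_0 y (c z x) + μ_0 z (c x y) + c x (μ_0 y z) + c y (μ_0 z x) + c z (μ_0 x y) = 0. -/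
/-! Differentiating the antisymmetry and Jacobi identities along the curve at `t = 0` gives the
claim; the Jacobi expression is quadratic in `μ t`, so by the product rule its derivative is the
cocycle expression of `c` with respect to `μ 0`. -/

instance continuousSMul_real_clm_clm_port (V : Type*) [NormedAddCommGroup V] [NormedSpace ℂ V] :
    ContinuousSMul ℝ (V →L[ℂ] V →L[ℂ] V) :=
  by
  constructor
  have h : (fun p : ℝ × (V →L[ℂ] V →L[ℂ] V) => p.1 • p.2) = fun p => ((p.1 : ℂ)) • p.2 := by
    funext p; ext x y; simp [Complex.coe_smul]
  rw [h]
  exact (Complex.continuous_ofReal.comp continuous_fst).smul continuous_snd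

section

variable {𝕜 : Type*} [NontriviallyNormedField 𝕜] {F : Type*} [NormedAddCommGroup F]
  [NormedSpace 𝕜 F] {f : 𝕜 → F} {f' : F} {t : 𝕜}

theorem HasDerivAt.eq_zero_of_forall_eq_zero (h : HasDerivAt f f' t) (hf : ∀ s, f s = 0) :
    f' = 0 :=
  h.unique <| (funext hf : f = fun _ => 0) ▸ hasDerivAt_const t 0

variable {𝕜' : Type*} [NontriviallyNormedField 𝕜'] [NormedAlgebra 𝕜 𝕜']
  {E : Type*} [NormedAddCommGroup E] [NormedSpace 𝕜' E] [NormedSpace 𝕜 E] [IsScalarTower 𝕜 𝕜' E]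
  {μ : 𝕜 → E →L[𝕜'] E →L[𝕜'] E} {c : E →L[𝕜'] E →L[𝕜'] E}

theorem HasDerivAt.apply_apply (h : HasDerivAt μ c t) (x y : E) :
    HasDerivAt (fun s => μ s x y) (c x y) t :=
  (((ContinuousLinearMap.apply 𝕜' E y).comp
    (ContinuousLinearMap.apply 𝕜' (E →L[𝕜'] E) x)).restrictScalars 𝕜).hasFDerivAt
    |>.comp_hasDerivAt t h

-- The product rule `HasDerivAt.clm_apply` needs operators linear over the parameter field `𝕜`.
theorem HasDerivAt.apply_restrictScalars (h : HasDerivAt μ c t) (x : E) :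
    HasDerivAt (fun s => (μ s x).restrictScalars 𝕜) ((c x).restrictScalars 𝕜) t :=
  ((ContinuousLinearMap.restrictScalarsL 𝕜' E E 𝕜 𝕜).comp
    ((ContinuousLinearMap.apply 𝕜' (E →L[𝕜'] E) x).restrictScalars 𝕜)).hasFDerivAt
    |>.comp_hasDerivAt t h

theorem HasDerivAt.apply_apply_nested (h : HasDerivAt μ c t) (x y z : E) :
    HasDerivAt (fun s => μ s x (μ s y z)) (c x (μ t y z) + μ t x (c y z)) t :=
  (h.apply_restrictScalars x).clm_apply (h.apply_apply y z)

end

theorem deriv_of_curve_of_brackets_is_cocycle_general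
    (V : Type*) [NormedAddCommGroup V] [NormedSpace ℂ V]
    (μ : ℝ → (V →L[ℂ] V →L[ℂ] V)) (c : V →L[ℂ] V →L[ℂ] V)
    (hanti : ∀ t : ℝ, ∀ x y : V, μ t x y = - μ t y x)
    (hjacobi : ∀ t : ℝ, ∀ x y z : V,
      μ t x (μ t y z) + μ t y (μ t z x) + μ t z (μ t x y) = 0)
    (hderiv : HasDerivAt μ c 0) :
    (∀ x y : V, c x y = - c y x) ∧
    (∀ x y z : V,
      μ 0 x (c y z) + μ 0 y (c z x) + μ 0 z (c x y)
        + c x (μ 0 y z) + c y (μ 0 z x) + c z (μ 0 x y) = 0) := by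
  refine ⟨fun x y => ?_, fun x y z => ?_⟩
  · have h := (hderiv.apply_apply x y).add (hderiv.apply_apply y x)
    refine eq_neg_of_add_eq_zero_left (h.eq_zero_of_forall_eq_zero fun t => ?_)
    rw [Pi.add_apply, hanti t x y, neg_add_cancel]
  · have h := ((hderiv.apply_apply_nested x y z).add (hderiv.apply_apply_nested y z x)).add
      (hderiv.apply_apply_nested z x y)
    rw [← h.eq_zero_of_forall_eq_zero (hjacobi · x y z)]
    abel

/-- The derivative of a curve of Lie brackets is a 2-cocycle: if `t ↦ μ t` is a curve of
Lie brackets on a finite-dimensional complex vector space `V` (each antisymmetric and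
satisfying the Jacobi identity) with derivative `c` at `t = 0`, then `c` is antisymmetric
and satisfies the 2-cocycle identity with respect to the bracket `μ 0`. -/
theorem deriv_of_curve_of_brackets_is_cocycle
    (V : Type*) [NormedAddCommGroup V] [NormedSpace ℂ V] [FiniteDimensional ℂ V]
    (μ : ℝ → (V →L[ℂ] V →L[ℂ] V)) (c : V →L[ℂ] V →L[ℂ] V)
    (hanti : ∀ t : ℝ, ∀ x y : V, μ t x y = - μ t y x)
    (hjacobi : ∀ t : ℝ, ∀ x y z : V,
      μ t x (μ t y z) + μ t y (μ t z x) + μ t z (μ t x y) = 0)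
    (hderiv : HasDerivAt μ c 0) :
    (∀ x y : V, c x y = - c y x) ∧
    (∀ x y z : V,
      μ 0 x (c y z) + μ 0 y (c z x) + μ 0 z (c x y)
        + c x (μ 0 y z) + c y (μ 0 z x) + c z (μ 0 x y) = 0) :=
  deriv_of_curve_of_brackets_is_cocycle_general V μ c hanti hjacobi hderiv
end
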